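/- arXiv:1908.09371 — 5 statements merged into one kernel-verified Lean document; each statement's English description precedes it below -/
import Mathlib

section
/- Let τ_s > 0 and D_s > 0 and define φ: ℝ → ℝ by φ(λ) = τ_s·λ + e^{−λ·D_s}. Then φ has a real root (i.e., there exists λ ∈ ℝ with φ(λ) = 0) if and only if e·D_s ≤ τ_s, where e is Euler's number. -/
/-!
Substituting `x = -λ·D_s` turns `τ_s·λ + e^{-λ·D_s} = 0` into `e^x = (τ_s / D_s)·x`. For `a > 0` the
line `y = a·x` meets the graph of `exp` iff its slope is at least that of the tangent line `y = e·x`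
through the origin: a root forces `x > 0` and then `e·x ≤ e^x = a·x`; conversely `e^x - a·x` changes
sign on `[0, 1]`.
-/

open Real

theorem Real.exists_exp_eq_mul_iff {a : ℝ} (ha : 0 < a) :
    (∃ x, exp x = a * x) ↔ exp 1 ≤ a := by
  constructor
  · rintro ⟨x, hx⟩
    have hx_pos : 0 < x := pos_of_mul_pos_right (hx ▸ exp_pos x) ha.le
    exact le_of_mul_le_mul_right (hx ▸ exp_one_mul_le_exp) hx_pos
  · intro hea
    have hsign : (0 : ℝ) ∈ Set.Icc (exp 1 - a * 1) (exp 0 - a * 0) := by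
      constructor <;> simp [hea]
    obtain ⟨x, -, hx⟩ := intermediate_value_Icc' zero_le_one
      (by fun_prop : Continuous fun x => exp x - a * x).continuousOn hsign
    exact ⟨x, sub_eq_zero.mp hx⟩

/-- `φ(λ) = τ_s·λ + exp(-λ·D_s)` has a real root iff `e·D_s ≤ τ_s`. -/
theorem stmt7 (τs Ds : ℝ) (hτ : 0 < τs) (hD : 0 < Ds) :
    (∃ lam : ℝ, τs * lam + Real.exp (-lam * Ds) = 0) ↔ Real.exp 1 * Ds ≤ τs := by
  have hroot_iff (lam : ℝ) :
      τs * lam + exp (-lam * Ds) = 0 ↔ exp (-lam * Ds) = τs / Ds * (-lam * Ds) := by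
    rw [div_mul_eq_mul_div, mul_div_assoc, mul_div_cancel_right₀ _ hD.ne', add_eq_zero_iff_eq_neg',
      mul_neg, ← neg_mul, mul_comm]
  calc (∃ lam, τs * lam + exp (-lam * Ds) = 0)
      ↔ ∃ x, exp x = τs / Ds * x := by
        simp only [hroot_iff]
        refine ⟨fun ⟨lam, h⟩ => ⟨_, h⟩, fun ⟨x, h⟩ => ⟨-x / Ds, ?_⟩⟩
        rwa [neg_div, neg_neg, div_mul_cancel₀ _ hD.ne']
    _ ↔ exp 1 ≤ τs / Ds := exists_exp_eq_mul_iff (div_pos hτ hD)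
    _ ↔ exp 1 * Ds ≤ τs := le_div_iff₀ hD
end

section
/- Let τ_s > 0 and D_s > 0 with e·D_s < τ_s, and define φ: ℝ → ℝ by φ(λ) = τ_s·λ + e^{−λ·D_s}. Then φ has exactly two distinct real roots λ_1 ≠ λ_2, and both roots are negative (the overdamped sink case). -/
/-!
Substituting `y = -λ D_s` turns `φ(λ) = 0` into `exp y = k y` with `k = τ_s / D_s`.
The function `g y = exp y - k y` decreases on `(-∞, log k]` and increases on `[log k, ∞)`; its
minimum `k (1 - log k)` is negative exactly when `k > e`. Since `g 0 = 1` and `g (2k) > 0`,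
`g` has one zero in `(0, log k)`, one in `(log k, 2k)`, and no others; both are positive, so the
corresponding roots `λ = -y / D_s` are negative.
-/

open Real Set

theorem exists_two_zeros_of_strictAntiOn_Iic_of_strictMonoOn_Ici {α : Type*}
    [ConditionallyCompleteLinearOrder α] [TopologicalSpace α] [OrderTopology α]
    [DenselyOrdered α] {f : α → ℝ} {a p c : α} (hf : Continuous f)
    (hanti : StrictAntiOn f (Iic p)) (hmono : StrictMonoOn f (Ici p))
    (hap : a < p) (hpc : p < c) (ha : 0 < f a) (hp : f p < 0) (hc : 0 < f c) :
    ∃ x₁ x₂, x₁ ∈ Ioo a p ∧ x₂ ∈ Ioo p c ∧ f x₁ = 0 ∧ f x₂ = 0 ∧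
      ∀ x, f x = 0 → x = x₁ ∨ x = x₂ := by
  obtain ⟨x₁, hx₁, hfx₁⟩ := intermediate_value_Ioo' hap.le hf.continuousOn ⟨hp, ha⟩
  obtain ⟨x₂, hx₂, hfx₂⟩ := intermediate_value_Ioo hpc.le hf.continuousOn ⟨hp, hc⟩
  refine ⟨x₁, x₂, hx₁, hx₂, hfx₁, hfx₂, fun x hx => ?_⟩
  rcases le_total x p with hxp | hpx
  · exact .inl (hanti.injOn hxp hx₁.2.le (hx.trans hfx₁.symm))
  · exact .inr (hmono.injOn hpx hx₂.1.le (hx.trans hfx₂.symm))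

theorem hasDerivAt_exp_sub_mul (k y : ℝ) :
    HasDerivAt (fun y => exp y - k * y) (exp y - k) y := by
  simpa using (hasDerivAt_exp y).fun_sub ((hasDerivAt_id' y).const_mul k)

theorem continuous_exp_sub_mul (k : ℝ) : Continuous fun y => exp y - k * y := by
  fun_prop

section ExpSubMul

variable {k : ℝ}

theorem strictAntiOn_exp_sub_mul (hk : 0 < k) :
    StrictAntiOn (fun y => exp y - k * y) (Iic (log k)) := by
  refine strictAntiOn_of_deriv_neg (convex_Iic _) (continuous_exp_sub_mul k).continuousOn
    fun y hy => ?_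
  rw [interior_Iic] at hy
  rw [(hasDerivAt_exp_sub_mul k y).deriv, sub_neg]
  exact (lt_log_iff_exp_lt hk).1 hy

theorem strictMonoOn_exp_sub_mul (hk : 0 < k) :
    StrictMonoOn (fun y => exp y - k * y) (Ici (log k)) := by
  refine strictMonoOn_of_deriv_pos (convex_Ici _) (continuous_exp_sub_mul k).continuousOn
    fun y hy => ?_
  rw [interior_Ici] at hy
  rw [(hasDerivAt_exp_sub_mul k y).deriv, sub_pos]
  exact (log_lt_iff_lt_exp hk).1 hy

theorem exp_sub_mul_log_neg (hk : exp 1 < k) : exp (log k) - k * log k < 0 := by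
  have hk₀ : 0 < k := (exp_pos 1).trans hk
  have hlog : 1 < log k := (lt_log_iff_exp_lt hk₀).2 hk
  rw [exp_log hk₀]
  nlinarith

theorem exp_sub_mul_two_mul_pos (hk : 0 < k) : 0 < exp (2 * k) - k * (2 * k) := by
  nlinarith [quadratic_le_exp_of_nonneg (by positivity : 0 ≤ 2 * k)]

theorem exists_two_pos_roots_exp_eq_mul (hk : exp 1 < k) :
    ∃ y₁ y₂, 0 < y₁ ∧ y₁ < y₂ ∧ exp y₁ = k * y₁ ∧ exp y₂ = k * y₂ ∧
      ∀ y, exp y = k * y → y = y₁ ∨ y = y₂ := by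
  have hk₀ : 0 < k := (exp_pos 1).trans hk
  have hlog : 1 < log k := (lt_log_iff_exp_lt hk₀).2 hk
  have hlog_lt : log k < 2 * k := by linarith [log_le_sub_one_of_pos hk₀]
  obtain ⟨y₁, y₂, hy₁, hy₂, hgy₁, hgy₂, huniq⟩ :=
    exists_two_zeros_of_strictAntiOn_Iic_of_strictMonoOn_Ici (a := 0) (continuous_exp_sub_mul k)
      (strictAntiOn_exp_sub_mul hk₀) (strictMonoOn_exp_sub_mul hk₀) (by linarith) hlog_lt
      (by simp) (exp_sub_mul_log_neg hk) (exp_sub_mul_two_mul_pos hk₀)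
  refine ⟨y₁, y₂, hy₁.1, hy₁.2.trans hy₂.1, sub_eq_zero.1 hgy₁, sub_eq_zero.1 hgy₂,
    fun y hy => huniq y (sub_eq_zero.2 hy)⟩

end ExpSubMul

theorem mul_add_exp_neg_mul_eq_zero_iff {τ D : ℝ} (hD : D ≠ 0) (lam : ℝ) :
    τ * lam + exp (-lam * D) = 0 ↔ exp (-lam * D) = τ / D * (-lam * D) := by
  have hlin : τ * lam = -(τ / D * (-lam * D)) := by field_simp
  rw [hlin, neg_add_eq_sub, sub_eq_zero]

theorem stmt9_general (τs Ds : ℝ) (hD : 0 < Ds) (h : Real.exp 1 * Ds < τs) :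
    ∃ lam₁ lam₂ : ℝ, lam₁ ≠ lam₂ ∧
      τs * lam₁ + Real.exp (-lam₁ * Ds) = 0 ∧
      τs * lam₂ + Real.exp (-lam₂ * Ds) = 0 ∧
      lam₁ < 0 ∧ lam₂ < 0 ∧
      (∀ lam : ℝ, τs * lam + Real.exp (-lam * Ds) = 0 → lam = lam₁ ∨ lam = lam₂) := by
  obtain ⟨y₁, y₂, hy₁, hy₁₂, hy₁_root, hy₂_root, huniq⟩ :=
    exists_two_pos_roots_exp_eq_mul ((lt_div_iff₀ hD).2 h)
  have hφ := mul_add_exp_neg_mul_eq_zero_iff (τ := τs) hD.ne'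
  have hsubst : ∀ y, -(-y / Ds) * Ds = y := fun y => by field_simp
  refine ⟨-y₁ / Ds, -y₂ / Ds, ((div_lt_div_iff_of_pos_right hD).2 (neg_lt_neg hy₁₂)).ne',
    (hφ _).2 (by rwa [hsubst]), (hφ _).2 (by rwa [hsubst]),
    div_neg_of_neg_of_pos (neg_neg_of_pos hy₁) hD,
    div_neg_of_neg_of_pos (neg_neg_of_pos (hy₁.trans hy₁₂)) hD, fun lam hlam => ?_⟩
  rcases huniq _ ((hφ lam).1 hlam) with e | e
  · exact .inl (by rw [← e]; field_simp)
  · exact .inr (by rw [← e]; field_simp)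

/-- If `e·D_s < τ_s`, then `φ` has exactly two distinct real roots, both negative. -/
theorem stmt9 (τs Ds : ℝ) (hτ : 0 < τs) (hD : 0 < Ds) (h : Real.exp 1 * Ds < τs) :
    ∃ lam₁ lam₂ : ℝ, lam₁ ≠ lam₂ ∧
      τs * lam₁ + Real.exp (-lam₁ * Ds) = 0 ∧
      τs * lam₂ + Real.exp (-lam₂ * Ds) = 0 ∧
      lam₁ < 0 ∧ lam₂ < 0 ∧
      (∀ lam : ℝ, τs * lam + Real.exp (-lam * Ds) = 0 → lam = lam₁ ∨ lam = lam₂) :=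
  stmt9_general τs Ds hD h
end

section
/- Let τ_s > 0 and D_s > 0 and let α, β be real numbers such that λ = α + βi satisfies τ_s·λ + e^{−λ·D_s} = 0 and 0 < D_s·β < π/2. Then α < 0; i.e., complex characteristic roots whose frequency β satisfies D_s·β ∈ (0, π/2) have negative real part, corresponding to asymptotically stable solutions that spiral towards the origin. -/
/-- A complex characteristic root `λ = α + βi` with `0 < D_s·β < π/2` has `α < 0`. -/
theorem stmt12 (τs Ds : ℝ) (hτ : 0 < τs) (hD : 0 < Ds) (α β : ℝ)
    (h : (τs : ℂ) * ((α : ℂ) + (β : ℂ) * Complex.I) +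
      Complex.exp (-((α : ℂ) + (β : ℂ) * Complex.I) * (Ds : ℂ)) = 0)
    (h1 : 0 < Ds * β) (h2 : Ds * β < Real.pi / 2) :
    α < 0 := by
  have hre := congrArg Complex.re h
  simp [Complex.exp_re, Complex.add_re, Complex.mul_re, Complex.mul_im] at hre
  -- hre : real-part equation
  have hcos : 0 < Real.cos (Ds * β) :=
    Real.cos_pos_of_mem_Ioo ⟨by linarith [Real.pi_pos], h2⟩
  have hexp : 0 < Real.exp (-(α * Ds)) := Real.exp_pos _
  rw [mul_comm β Ds] at hre
  nlinarith [mul_pos hexp hcos]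
end

section
/- Let τ_s > 0 and D_s > 0 with 0 < D_s < (π/2)·τ_s. Then every complex root λ of the characteristic equation τ_s·λ + e^{−λ·D_s} = 0 satisfies Re(λ) < 0; i.e., below the Hopf line D_s = (π/2)·τ_s all characteristic roots have negative real part and the zero solution of the delay equation is asymptotically stable. -/
/-- Below the Hopf line (`0 < D_s < (π/2)·τ_s`), every complex characteristic root has
negative real part. -/
theorem stmt15 (τs Ds : ℝ) (hτ : 0 < τs) (hD : 0 < Ds) (h : Ds < (Real.pi / 2) * τs) :
    ∀ lam : ℂ, (τs : ℂ) * lam + Complex.exp (-lam * Ds) = 0 → lam.re < 0 := by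
  intro lam heq
  by_contra hx
  push_neg at hx
  set x := lam.re with hxdef
  set y := lam.im with hydef
  have hre := congrArg Complex.re heq
  have him := congrArg Complex.im heq
  simp [Complex.exp_re, Complex.exp_im, Complex.add_re, Complex.add_im,
    Complex.mul_re, Complex.mul_im, Complex.neg_re, Complex.neg_im,
    Complex.ofReal_re, Complex.ofReal_im] at hre him
  -- hre : τs * x + Real.exp (-(x*Ds)) * Real.cos (-(y*Ds)) = 0 (roughly)
  have hcosval : Real.cos (y * Ds) = Real.cos (-(y * Ds)) := (Real.cos_neg _).symm
  have hexp_le : Real.exp (-(x * Ds)) ≤ 1 := by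
    apply Real.exp_le_one_iff.mpr
    nlinarith
  have hexp_pos : 0 < Real.exp (-(x * Ds)) := Real.exp_pos _
  -- derive cos (y*Ds) ≤ 0
  have hcos_le : Real.cos (y * Ds) ≤ 0 := by
    nlinarith [Real.cos_neg (y * Ds)]
  -- |y*Ds| ≥ π/2
  have habs : Real.pi / 2 ≤ |y * Ds| := by
    by_contra hlt
    push_neg at hlt
    have := Real.cos_pos_of_mem_Ioo (x := y * Ds) ⟨by linarith [abs_lt.mp hlt], (abs_lt.mp hlt).2⟩
    linarith
  -- τ|y| ≤ 1
  have hy_le : τs * |y| ≤ 1 := by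
    have hsin : |Real.sin (y * Ds)| ≤ 1 := Real.abs_sin_le_one _
    have : τs * |y| = Real.exp (-(x * Ds)) * |Real.sin (y * Ds)| := by
      rw [← abs_of_pos hτ, ← abs_of_pos hexp_pos, ← abs_mul, ← abs_mul]
      congr 1
      linarith [him]
    calc τs * |y| = Real.exp (-(x * Ds)) * |Real.sin (y * Ds)| := this
      _ ≤ 1 * 1 := by
          apply mul_le_mul hexp_le hsin (abs_nonneg _) zero_le_one
      _ = 1 := one_mul 1
  have habsy : |y * Ds| = |y| * Ds := by
    rw [abs_mul, abs_of_pos hD]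
  have hpi : 0 < Real.pi := Real.pi_pos
  nlinarith [habs, hy_le, habsy, abs_nonneg y]
end

section
/- Let τ_s > 0 and D_s > 0 with D_s > (π/2)·τ_s. Then there exists a complex root λ of the characteristic equation τ_s·λ + e^{−λ·D_s} = 0 with Re(λ) > 0; i.e., above the Hopf line D_s = (π/2)·τ_s the characteristic equation has a root with positive real part and solutions of the delay equation diverge (instability). -/
/-! With `μ = λ D_s` the characteristic equation becomes `μ e^μ = -a`, `a = D_s / τ_s`.
For `y ∈ (π/2, π)` the point `μ(y) = -y cot y + i y` has `Re μ(y) > 0` and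
`μ(y) e^{μ(y)} = -(y / sin y) e^{-y cot y}`, a negative real number whose modulus is `π/2` at
`y = π/2` and tends to `∞` as `y → π`; the intermediate value theorem finds `y` with modulus `a`. -/

open Real

-- `arg μ + Im μ = π` along this curve, so `μ e^μ` is a negative real.
noncomputable def lambertCurve (y : ℝ) : ℂ := ⟨-y * cos y / sin y, y⟩

noncomputable def lambertCurveNorm (y : ℝ) : ℝ := y / sin y * exp (lambertCurve y).re

lemma lambertCurve_mul_exp {y : ℝ} (hy : sin y ≠ 0) :
    lambertCurve y * Complex.exp (lambertCurve y) = -(lambertCurveNorm y : ℂ) := by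
  apply Complex.ext <;>
    simp only [lambertCurveNorm, lambertCurve, Complex.mul_re, Complex.mul_im, Complex.exp_re,
      Complex.exp_im, Complex.neg_re, Complex.neg_im, Complex.ofReal_re, Complex.ofReal_im] <;>
    field_simp
  · linear_combination (-y) * sin_sq_add_cos_sq y
  · ring

lemma lambertCurve_re_pos {y : ℝ} (hy₁ : π / 2 < y) (hy₂ : y < π) : 0 < (lambertCurve y).re := by
  have hsin : 0 < sin y := sin_pos_of_pos_of_lt_pi (by linarith [pi_pos]) hy₂
  have hcos : cos y < 0 := cos_neg_of_pi_div_two_lt_of_lt hy₁ (by linarith)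
  have : 0 < y * -cos y / sin y := div_pos (mul_pos (by linarith [pi_pos]) (neg_pos.2 hcos)) hsin
  simpa [lambertCurve, neg_mul, mul_neg, neg_div] using this

lemma lambertCurveNorm_pi_div_two : lambertCurveNorm (π / 2) = π / 2 := by
  simp [lambertCurveNorm, lambertCurve]

lemma div_sin_le_lambertCurveNorm {y : ℝ} (hy₁ : π / 2 < y) (hy₂ : y < π) :
    y / sin y ≤ lambertCurveNorm y := by
  have hsin : 0 < sin y := sin_pos_of_pos_of_lt_pi (by linarith [pi_pos]) hy₂
  have : 0 ≤ y / sin y := div_nonneg (by linarith [pi_pos]) hsin.le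
  exact le_mul_of_one_le_right this (one_le_exp (lambertCurve_re_pos hy₁ hy₂).le)

lemma continuousOn_lambertCurveNorm : ContinuousOn lambertCurveNorm (Set.Ioo 0 π) := by
  have hsin : ∀ y ∈ Set.Ioo 0 π, sin y ≠ 0 := fun y hy => (sin_pos_of_pos_of_lt_pi hy.1 hy.2).ne'
  unfold lambertCurveNorm lambertCurve
  fun_prop (disch := assumption)

lemma exists_lambertCurveNorm_eq {a : ℝ} (ha : π / 2 < a) :
    ∃ y ∈ Set.Ioo (π / 2) π, lambertCurveNorm y = a := by
  have hπ := pi_gt_three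
  set ε := π / (2 * a) with hε
  have ha₀ : 0 < a := by linarith
  have hε₀ : 0 < ε := by positivity
  have hε₁ : ε < 1 := by rw [hε, div_lt_one (by linarith)]; linarith
  have hy₁ : π / 2 < π - ε := by linarith
  have hy₂ : π - ε < π := by linarith
  have hsin : 0 < sin (π - ε) := sin_pos_of_pos_of_lt_pi (by linarith) hy₂
  have hlt : a < lambertCurveNorm (π - ε) :=
    calc a = π / 2 / ε := by rw [hε]; field_simp
      _ < (π - ε) / ε := div_lt_div_of_pos_right hy₁ hε₀
      _ ≤ (π - ε) / sin (π - ε) := by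
        refine div_le_div_of_nonneg_left (by linarith) hsin ?_
        rw [sin_pi_sub]; exact (sin_lt hε₀).le
      _ ≤ lambertCurveNorm (π - ε) := div_sin_le_lambertCurveNorm hy₁ hy₂
  have hcont : ContinuousOn lambertCurveNorm (Set.Icc (π / 2) (π - ε)) :=
    continuousOn_lambertCurveNorm.mono (Set.Icc_subset_Ioo (by linarith) hy₂)
  obtain ⟨y, hy, rfl⟩ := intermediate_value_Ioo hy₁.le hcont
    ⟨by rwa [lambertCurveNorm_pi_div_two], hlt⟩
  exact ⟨y, ⟨hy.1, hy.2.trans hy₂⟩, rfl⟩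

theorem exists_re_pos_mul_exp_eq_neg {a : ℝ} (ha : π / 2 < a) :
    ∃ μ : ℂ, μ * Complex.exp μ = -a ∧ 0 < μ.re := by
  obtain ⟨y, hy, rfl⟩ := exists_lambertCurveNorm_eq ha
  exact ⟨lambertCurve y, lambertCurve_mul_exp (sin_pos_of_pos_of_lt_pi
    (by linarith [pi_pos, hy.1]) hy.2).ne', lambertCurve_re_pos hy.1 hy.2⟩

/-- Above the Hopf line (`D_s > (π/2)·τ_s`), there is a characteristic root with
positive real part. -/
theorem stmt16 (τs Ds : ℝ) (hτ : 0 < τs) (hD : 0 < Ds) (h : (Real.pi / 2) * τs < Ds) :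
    ∃ lam : ℂ, (τs : ℂ) * lam + Complex.exp (-lam * Ds) = 0 ∧ 0 < lam.re := by
  obtain ⟨μ, hμ, hre⟩ := exists_re_pos_mul_exp_eq_neg (a := Ds / τs) (by rwa [lt_div_iff₀ hτ])
  refine ⟨μ / Ds, ?_, by simpa using div_pos hre hD⟩
  have hD' : (Ds : ℂ) ≠ 0 := by exact_mod_cast hD.ne'
  have hτ' : (τs : ℂ) ≠ 0 := by exact_mod_cast hτ.ne'
  rw [neg_mul, div_mul_cancel₀ μ hD', Complex.exp_neg]
  push_cast at hμ
  field_simp at hμ ⊢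
  linear_combination hμ
end
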